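/- arXiv:1208.5175 — 3 statements merged into one kernel-verified Lean document; each statement's English description precedes it below -/
import Mathlib

section
/- Let k > 0 and let b : ℝ² → ℝ be continuous with b(x) ≥ 0 for all x. Suppose p : ℝ² → ℝ is twice continuously differentiable, satisfies Δp(x) − k²·p(x) − b(x)·p(x) = b(x) for all x ∈ ℝ², and vanishes at infinity. Then 1 + p(x) > 0 for every x ∈ ℝ². -/
/-!
If `1 + p` were nonpositive somewhere, `p` would take a negative value; as `p` vanishes at
infinity it then attains a global minimum at some `z`, with `p z ≤ -1`. At a minimum every
second directional derivative, hence the Laplacian, is nonnegative (the one-variable second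
derivative test along lines), whereas the equation gives
`Δp(z) = k² p(z) + b(z) (1 + p(z)) ≤ -k² < 0`.
-/

open MeasureTheory Real Filter Topology

noncomputable section

/-- The plane `ℝ²`. -/
abbrev E2 := EuclideanSpace ℝ (Fin 2)

/-- The Macdonald function `K₀`, via its integral representation
`K₀(y) = ∫₀^∞ exp(−y·cosh t) dt`. -/
noncomputable def K0 (y : ℝ) : ℝ := ∫ t in Set.Ioi (0 : ℝ), Real.exp (-y * Real.cosh t)

/-- The Laplacian of `f : ℝ² → ℝ`: the sum of its second partial derivatives. -/
noncomputable def lap (f : E2 → ℝ) (x : E2) : ℝ :=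
  ∑ i : Fin 2, iteratedFDeriv ℝ 2 f x ![EuclideanSpace.single i 1, EuclideanSpace.single i 1]

/-- A function vanishes at infinity if `f x → 0` as `‖x‖ → ∞`. -/
def VanishesAtInfinity (f : E2 → ℝ) : Prop := Tendsto f (cocompact E2) (𝓝 0)

/-- The `C^m(s)` norm of `f`: the supremum over `s` of the norms of all derivatives
of order `≤ m`. -/
noncomputable def CNorm (m : ℕ) (f : E2 → ℝ) (s : Set E2) : ℝ :=
  ⨆ x ∈ s, ⨆ i ∈ Finset.range (m + 1), ‖iteratedFDeriv ℝ i f x‖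

theorem IsLocalMin.deriv_deriv_nonneg {f : ℝ → ℝ} {a : ℝ} (h : IsLocalMin f a)
    (hc : ContinuousAt f a) : 0 ≤ deriv (deriv f) a := by
  by_contra! hneg
  -- The second derivative test makes `a` also a local maximum, so `f` is constant near `a`.
  have hconst : f =ᶠ[𝓝 a] fun _ ↦ f a := by
    filter_upwards [h, isLocalMax_of_deriv_deriv_neg hneg h.deriv_eq_zero hc] with x h₁ h₂
    exact le_antisymm h₂ h₁
  have hderiv : deriv f =ᶠ[𝓝 a] fun _ ↦ 0 := by
    simpa using hconst.deriv
  simp [hderiv.deriv_eq] at hneg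

section NormedSpace

variable {E : Type*} [NormedAddCommGroup E] [NormedSpace ℝ E]

theorem iteratedDeriv_comp_add_smul {f : E → ℝ} {n : ℕ} (hf : ContDiff ℝ n f)
    (x v : E) (t : ℝ) :
    iteratedDeriv n (fun s : ℝ ↦ f (x + s • v)) t =
      iteratedFDeriv ℝ n f (x + t • v) fun _ ↦ v := by
  have hshift : ContDiff ℝ n fun y ↦ f (x + y) := hf.comp (contDiff_const.add contDiff_id)
  have := (ContinuousLinearMap.smulRight (1 : ℝ →L[ℝ] ℝ) v).iteratedFDeriv_comp_right
    hshift t le_rfl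
  rw [iteratedDeriv_eq_iteratedFDeriv]
  simp only [Function.comp_def, ContinuousLinearMap.smulRight_apply,
    one_apply_eq_self] at this
  rw [this, iteratedFDeriv_comp_add_left]
  simp

theorem IsLocalMin.iteratedFDeriv_two_nonneg {f : E → ℝ} {x : E} (h : IsLocalMin f x)
    (hf : ContDiff ℝ 2 f) (v : E) : 0 ≤ iteratedFDeriv ℝ 2 f x fun _ ↦ v := by
  have hline : IsLocalMin (fun s : ℝ ↦ f (x + s • v)) 0 := by
    have h' : IsLocalMin f (x + (0 : ℝ) • v) := by simpa using h
    exact h'.comp_continuous (g := fun s : ℝ ↦ x + s • v) (by fun_prop)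
  have := hline.deriv_deriv_nonneg (hf.continuous.comp (by fun_prop)).continuousAt
  rwa [← iteratedDeriv_one, ← iteratedDeriv_succ', iteratedDeriv_comp_add_smul hf, zero_smul,
    add_zero] at this

end NormedSpace

theorem IsLocalMin.lap_nonneg {p : E2 → ℝ} {x : E2} (h : IsLocalMin p x)
    (hp : ContDiff ℝ 2 p) : 0 ≤ lap p x :=
  Finset.sum_nonneg fun i _ ↦ by
    simpa [iteratedFDeriv_two_apply] using
      h.iteratedFDeriv_two_nonneg hp (EuclideanSpace.single i 1)

theorem VanishesAtInfinity.exists_forall_le {f : E2 → ℝ} (hvan : VanishesAtInfinity f)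
    (hf : Continuous f) {x₀ : E2} (hx₀ : f x₀ < 0) : ∃ z, ∀ y, f z ≤ f y :=
  hf.exists_forall_le' x₀ <| (hvan.eventually (eventually_gt_nhds hx₀)).mono fun _ ↦ le_of_lt

theorem statement1_general (k : ℝ) (hk : 0 < k) (b : E2 → ℝ)
    (hb0 : ∀ x, 0 ≤ b x) (p : E2 → ℝ) (hp : ContDiff ℝ 2 p)
    (heq : ∀ x, lap p x - k ^ 2 * p x - b x * p x = b x)
    (hvan : VanishesAtInfinity p) :
    ∀ x, 0 < 1 + p x := by
  intro x
  by_contra! hx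
  obtain ⟨z, hz⟩ := hvan.exists_forall_le hp.continuous (x₀ := x) (by linarith)
  have hlap : 0 ≤ lap p z := IsLocalMin.lap_nonneg (.of_forall hz) hp
  have hpz : p z ≤ -1 := (hz x).trans (by linarith)
  have hbz : b z * (1 + p z) ≤ 0 := mul_nonpos_of_nonneg_of_nonpos (hb0 z) (by linarith)
  linarith [heq z, mul_le_mul_of_nonneg_left hpz (sq_nonneg k), pow_pos hk 2]

/-- Lemma 2.1. If `Δp − k²p − b·p = b` with `b` continuous and
nonnegative and `p` C² vanishing at infinity, then `1 + p > 0` everywhere. -/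
theorem statement1 (k : ℝ) (hk : 0 < k) (b : E2 → ℝ) (hb : Continuous b)
    (hb0 : ∀ x, 0 ≤ b x) (p : E2 → ℝ) (hp : ContDiff ℝ 2 p)
    (heq : ∀ x, lap p x - k ^ 2 * p x - b x * p x = b x)
    (hvan : VanishesAtInfinity p) :
    ∀ x, 0 < 1 + p x :=
  statement1_general k hk b hb0 p hp heq hvan
end
end

section
/- Let k > 0 and let a : ℝ² → ℝ be continuous with a(x) ≥ k² for all x ∈ ℝ². If w : ℝ² → ℝ is twice continuously differentiable, satisfies Δw(x) = a(x)·w(x) for all x ∈ ℝ², and vanishes at infinity, then w is identically zero on ℝ². -/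
/-
Maximum principle. If `w` were positive somewhere, then, since it vanishes at infinity, it would
attain a positive global maximum at some `z`. There every second directional derivative is `≤ 0`,
so `Δw(z) ≤ 0 < a(z) w(z)`. Applied to `-w` (which solves the same equation) this gives `w ≥ 0`.
-/

open MeasureTheory Real Filter Topology

noncomputable section

theorem IsLocalMax.deriv_deriv_nonpos {g : ℝ → ℝ} {t : ℝ} (h : IsLocalMax g t)
    (hc : ContinuousAt g t) : deriv (deriv g) t ≤ 0 := by
  by_contra! hpos
  -- By the second-derivative test `t` would also be a local minimum, so `g` is locally constant.
  have hconst : g =ᶠ[𝓝 t] fun _ ↦ g t :=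
    (h.and (isLocalMin_of_deriv_deriv_pos hpos h.deriv_eq_zero hc)).mono
      fun _ hs ↦ le_antisymm hs.1 hs.2
  have hderiv : deriv g =ᶠ[𝓝 t] fun _ ↦ 0 :=
    hconst.eventually_nhds.mono fun s hs ↦ by
      simp [(show g =ᶠ[𝓝 s] fun _ ↦ g t from hs).deriv_eq]
  simp [hderiv.deriv_eq] at hpos

theorem IsLocalMax.fderiv_fderiv_apply_nonpos {E : Type*} [NormedAddCommGroup E]
    [NormedSpace ℝ E] {f : E → ℝ} {z : E} (h : IsLocalMax f z) (hf : Differentiable ℝ f)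
    (hf' : DifferentiableAt ℝ (fderiv ℝ f) z) (v : E) :
    fderiv ℝ (fderiv ℝ f) z v v ≤ 0 := by
  have hline : ∀ t : ℝ, HasDerivAt (fun t : ℝ ↦ z + t • v) v t := fun t ↦ by
    simpa using ((hasDerivAt_id t).smul_const v).const_add z
  have hderiv : deriv (fun t : ℝ ↦ f (z + t • v)) = fun t ↦ fderiv ℝ f (z + t • v) v :=
    funext fun t ↦ ((hf _).hasFDerivAt.comp_hasDerivAt t (hline t)).deriv
  have hderiv2 : HasDerivAt (fun t : ℝ ↦ fderiv ℝ f (z + t • v) v)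
      (fderiv ℝ (fderiv ℝ f) z v v) 0 := by
    have hf'0 : HasFDerivAt (fderiv ℝ f) (fderiv ℝ (fderiv ℝ f) z) (z + (0 : ℝ) • v) := by
      simpa using hf'.hasFDerivAt
    exact (ContinuousLinearMap.apply ℝ ℝ v).hasFDerivAt.comp_hasDerivAt 0
      (hf'0.comp_hasDerivAt 0 (hline 0))
  have hmax : IsLocalMax (fun t : ℝ ↦ f (z + t • v)) 0 :=
    IsLocalMax.comp_continuous (b := (0 : ℝ)) (by simpa using h) (by fun_prop)
  simpa [hderiv, hderiv2.deriv] using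
    hmax.deriv_deriv_nonpos (hf.continuous.comp (by fun_prop)).continuousAt

theorem lap_nonpos_of_isLocalMax {f : E2 → ℝ} {z : E2} (h : IsLocalMax f z)
    (hf : ContDiff ℝ 2 f) : lap f z ≤ 0 :=
  Finset.sum_nonpos fun i _ ↦ by
    simpa [iteratedFDeriv_two_apply] using
      h.fderiv_fderiv_apply_nonpos (hf.differentiable (by norm_num))
        ((hf.fderiv_right (m := 1) (by norm_num)).differentiable one_ne_zero z)
        (EuclideanSpace.single i 1)

theorem lap_neg (f : E2 → ℝ) (x : E2) : lap (-f) x = -lap f x := by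
  simp [lap, iteratedFDeriv_neg_apply]

theorem VanishesAtInfinity.neg {f : E2 → ℝ} (hf : VanishesAtInfinity f) :
    VanishesAtInfinity (-f) := by
  rw [VanishesAtInfinity, ← neg_zero]; exact Filter.Tendsto.neg hf

theorem nonpos_of_lap_eq_mul {a w : E2 → ℝ} (ha : ∀ x, 0 < a x) (hw : ContDiff ℝ 2 w)
    (heq : ∀ x, lap w x = a x * w x) (hvan : VanishesAtInfinity w) (x : E2) : w x ≤ 0 := by
  by_contra! hpos
  obtain ⟨z, hz⟩ :=
    hw.continuous.exists_forall_ge' x (hvan.eventually (eventually_le_nhds hpos))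
  have hlap_pos : 0 < lap w z := heq z ▸ mul_pos (ha z) (hpos.trans_le (hz x))
  exact (lap_nonpos_of_isLocalMax (.of_forall hz) hw).not_gt hlap_pos

theorem statement3_general (k : ℝ) (hk : 0 < k) (a : E2 → ℝ)
    (halb : ∀ x, k ^ 2 ≤ a x) (w : E2 → ℝ) (hw : ContDiff ℝ 2 w)
    (heq : ∀ x, lap w x = a x * w x) (hvan : VanishesAtInfinity w) :
    ∀ x, w x = 0 := by
  have ha : ∀ x, 0 < a x := fun x ↦ (pow_pos hk 2).trans_le (halb x)
  have hneg : ∀ x, lap (-w) x = a x * (-w) x := fun x ↦ by simp [lap_neg, heq]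
  intro x
  exact le_antisymm (nonpos_of_lap_eq_mul ha hw heq hvan x)
    (neg_nonpos.mp (nonpos_of_lap_eq_mul ha hw.neg hneg hvan.neg x))

/-- uniqueness step of Theorem 2.1. If `Δw = a·w` with `a ≥ k² > 0`
and `w` is C² and vanishes at infinity, then `w ≡ 0`. -/
theorem statement3 (k : ℝ) (hk : 0 < k) (a : E2 → ℝ) (ha : Continuous a)
    (halb : ∀ x, k ^ 2 ≤ a x) (w : E2 → ℝ) (hw : ContDiff ℝ 2 w)
    (heq : ∀ x, lap w x = a x * w x) (hvan : VanishesAtInfinity w) :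
    ∀ x, w x = 0 :=
  statement3_general k hk a halb w hw heq hvan
end
end

section
/- Let Ω ⊆ ℝ² be an open set, let a : Ω → ℝ, and let 0 < s̲ < s̄. Let w : Ω × ℝ → ℝ be three times continuously differentiable (jointly in all variables) and suppose that Δₓw(x,s) + s²·‖∇ₓw(x,s)‖² = a(x)/s² for all x ∈ Ω and all s ∈ [s̲, s̄]. Define q(x,s) = ∂w/∂s(x,s) and T(x) = w(x, s̄). Then for every x ∈ Ω and every s ∈ [s̲, s̄]: Δₓq(x,s) − (2/s)·∫_s^{s̄} Δₓq(x,τ) dτ − 2s²·∇ₓq(x,s)·∫_s^{s̄} ∇ₓq(x,τ) dτ + 4s·‖−∫_s^{s̄} ∇ₓq(x,τ) dτ + ∇T(x)‖² + 2s²·∇T(x)·∇ₓq(x,s) = −(2/s)·ΔT(x). -/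
/-!
Multiplying the equation by `s²` shows that `s² Δw + s⁴ |∇w|² = a` does not depend on `s`.
Differentiating in `s` eliminates `a`: since `s`-derivatives commute with `x`-derivatives of a
`C³` function, `Δq + (2/s) Δw + 2 s² ∇q · ∇w + 4 s |∇w|² = 0`. Substituting
`Δw(s) = ΔT − ∫ₛ^{s̄} Δq` and `∇w(s) = ∇T − ∫ₛ^{s̄} ∇q` (fundamental theorem of calculus,
the `x`-derivatives of `q` being continuous in `s`) gives the identity.
-/

open MeasureTheory Real Filter Topology

noncomputable section

section PartialDerivatives

variable {E F : Type*} [NormedAddCommGroup E] [NormedSpace ℝ E] [NormedAddCommGroup F]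
  [NormedSpace ℝ F] {f : E × ℝ → F} {U : Set (E × ℝ)} {p : E × ℝ} {x : E} {t : ℝ}
  {m n : WithTop ℕ∞}

open ContinuousLinearMap

def fderivFst (f : E × ℝ → F) (p : E × ℝ) : E →L[ℝ] F := fderiv ℝ (fun y => f (y, p.2)) p.1

def derivSnd (f : E × ℝ → F) (p : E × ℝ) : F := deriv (fun t => f (p.1, t)) p.2

lemma fderivFst_eq (hf : DifferentiableAt ℝ f p) :
    fderivFst f p = (fderiv ℝ f p).comp (inl ℝ E ℝ) :=
  (hf.hasFDerivAt.comp p.1 (hasFDerivAt_prodMk_left p.1 p.2)).fderiv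

lemma derivSnd_eq (hf : DifferentiableAt ℝ f p) : derivSnd f p = fderiv ℝ f p (0, 1) :=
  (hf.hasFDerivAt.comp_hasDerivAt p.2
    ((hasDerivAt_const p.2 p.1).prodMk (hasDerivAt_id p.2))).deriv

lemma Filter.EventuallyEq.fderivFst_eq {g : E × ℝ → F} (h : f =ᶠ[𝓝 p] g) :
    fderivFst f p = fderivFst g p :=
  (h.comp_tendsto ((continuous_id.prodMk continuous_const).tendsto' p.1 p rfl)).fderiv_eq

lemma ContDiffOn.fderivFst (hf : ContDiffOn ℝ n f U) (hU : IsOpen U) (hmn : m + 1 ≤ n) :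
    ContDiffOn ℝ m (fderivFst f) U :=
  (((compL ℝ E (E × ℝ) F).flip (inl ℝ E ℝ)).contDiff.comp_contDiffOn
    (hf.fderiv_of_isOpen hU hmn)).congr fun _ hp =>
      fderivFst_eq ((hf.differentiableOn (by rintro rfl; simp at hmn)).differentiableAt
        (hU.mem_nhds hp))

lemma ContDiffOn.derivSnd (hf : ContDiffOn ℝ n f U) (hU : IsOpen U) (hmn : m + 1 ≤ n) :
    ContDiffOn ℝ m (derivSnd f) U :=
  ((hf.fderiv_of_isOpen hU hmn).clm_apply contDiffOn_const).congr fun _ hp =>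
    derivSnd_eq ((hf.differentiableOn (by rintro rfl; simp at hmn)).differentiableAt
      (hU.mem_nhds hp))

lemma fderiv_derivSnd_apply (hf : ContDiffOn ℝ 2 f U) (hU : IsOpen U) (hp : p ∈ U)
    (v : E × ℝ) :
    fderiv ℝ (derivSnd f) p v = fderiv ℝ (fderiv ℝ f) p (0, 1) v := by
  have hD : DifferentiableAt ℝ (fderiv ℝ f) p :=
    ((hf.fderiv_of_isOpen hU (by norm_num : (1 : WithTop ℕ∞) + 1 ≤ 2)).differentiableOn
      one_ne_zero).differentiableAt (hU.mem_nhds hp)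
  have hsnd : derivSnd f =ᶠ[𝓝 p] fun q => fderiv ℝ f q (0, 1) := by
    filter_upwards [hU.mem_nhds hp] with q hq
    exact derivSnd_eq ((hf.differentiableOn two_ne_zero).differentiableAt (hU.mem_nhds hq))
  rw [hsnd.fderiv_eq, (hD.hasFDerivAt.clm_apply (hasFDerivAt_const _ _)).fderiv]
  simpa using (hf.contDiffAt (hU.mem_nhds hp)).isSymmSndFDerivAt (by simp) v (0, 1)

lemma hasDerivAt_fderivFst (hf : ContDiffOn ℝ 2 f U) (hU : IsOpen U) (hp : (x, t) ∈ U) :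
    HasDerivAt (fun τ => fderivFst f (x, τ)) (fderivFst (derivSnd f) (x, t)) t := by
  have hD : DifferentiableAt ℝ (fderiv ℝ f) (x, t) :=
    ((hf.fderiv_of_isOpen hU (by norm_num : (1 : WithTop ℕ∞) + 1 ≤ 2)).differentiableOn
      one_ne_zero).differentiableAt (hU.mem_nhds hp)
  have hline : (fun τ => fderivFst f (x, τ)) =ᶠ[𝓝 t]
      fun τ => (fderiv ℝ f (x, τ)).comp (inl ℝ E ℝ) := by
    filter_upwards [(continuous_const.prodMk continuous_id).continuousAt.preimage_mem_nhds
      (hU.mem_nhds hp)] with τ hτ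
    exact fderivFst_eq ((hf.differentiableOn two_ne_zero).differentiableAt (hU.mem_nhds hτ))
  have hval : fderivFst (derivSnd f) (x, t) =
      (fderiv ℝ (fderiv ℝ f) (x, t) (0, 1)).comp (inl ℝ E ℝ) := by
    have hq : ContDiffOn ℝ 1 (derivSnd f) U := hf.derivSnd hU (by norm_num)
    rw [fderivFst_eq ((hq.differentiableOn one_ne_zero).differentiableAt (hU.mem_nhds hp))]
    ext v
    exact fderiv_derivSnd_apply hf hU hp (v, 0)
  rw [hval]
  refine HasDerivAt.congr_of_eventuallyEq ?_ hline
  exact ((compL ℝ E (E × ℝ) F).flip (inl ℝ E ℝ)).hasFDerivAt.comp_hasDerivAt t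
    (hD.hasFDerivAt.comp_hasDerivAt t ((hasDerivAt_const t x).prodMk (hasDerivAt_id t)))

lemma hasDerivAt_fderivFst_fderivFst (hf : ContDiffOn ℝ 3 f U) (hU : IsOpen U)
    (hp : (x, t) ∈ U) :
    HasDerivAt (fun τ => fderivFst (fderivFst f) (x, τ))
      (fderivFst (fderivFst (derivSnd f)) (x, t)) t := by
  have hcomm : derivSnd (fderivFst f) =ᶠ[𝓝 (x, t)] fderivFst (derivSnd f) := by
    filter_upwards [hU.mem_nhds hp] with q hq
    exact (hasDerivAt_fderivFst (hf.of_le (by norm_num)) hU hq).deriv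
  rw [← hcomm.fderivFst_eq]
  exact hasDerivAt_fderivFst (hf.fderivFst hU (by norm_num)) hU hp

end PartialDerivatives

section Gradient

variable {E : Type*} [NormedAddCommGroup E] [InnerProductSpace ℝ E] [CompleteSpace E]
  {f : E × ℝ → ℝ} {U : Set (E × ℝ)} {x : E} {t : ℝ}

lemma hasDerivAt_gradient_slice (hf : ContDiffOn ℝ 2 f U) (hU : IsOpen U) (hp : (x, t) ∈ U) :
    HasDerivAt (fun τ => gradient (fun y => f (y, τ)) x)
      (gradient (fun y => derivSnd f (y, t)) x) t :=
  (InnerProductSpace.toDual ℝ E).symm.toContinuousLinearEquiv.hasFDerivAt.comp_hasDerivAt t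
    (hasDerivAt_fderivFst hf hU hp)

lemma continuousOn_gradient_slice (hf : ContDiffOn ℝ 1 f U) (hU : IsOpen U) (x : E) :
    ContinuousOn (fun τ => gradient (fun y => f (y, τ)) x) {τ | (x, τ) ∈ U} :=
  (InnerProductSpace.toDual ℝ E).symm.continuous.comp_continuousOn <|
    (hf.fderivFst hU (by norm_num : (0 : WithTop ℕ∞) + 1 ≤ 1)).continuousOn.comp
      (continuous_const.prodMk continuous_id).continuousOn fun _ ht => ht

end Gradient

section Laplacian

variable {f : E2 × ℝ → ℝ} {U : Set (E2 × ℝ)} {x : E2} {t : ℝ}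

open ContinuousLinearMap in
def hessianTrace : (E2 →L[ℝ] E2 →L[ℝ] ℝ) →L[ℝ] ℝ :=
  ∑ i : Fin 2, (apply ℝ ℝ (EuclideanSpace.single i 1)).comp
    (apply ℝ (E2 →L[ℝ] ℝ) (EuclideanSpace.single i 1))

lemma lap_eq_hessianTrace (h : E2 → ℝ) (x : E2) :
    lap h x = hessianTrace (fderiv ℝ (fderiv ℝ h) x) := by
  simp only [lap, hessianTrace, iteratedFDeriv_two_apply, FunLike.coe_sum,
    Finset.sum_apply, ContinuousLinearMap.coe_comp, Function.comp_apply,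
    ContinuousLinearMap.apply_apply, Matrix.cons_val_zero, Matrix.cons_val_one]

lemma lap_slice_eq (f : E2 × ℝ → ℝ) (x : E2) (t : ℝ) :
    lap (fun y => f (y, t)) x = hessianTrace (fderivFst (fderivFst f) (x, t)) :=
  lap_eq_hessianTrace _ x

lemma hasDerivAt_lap_slice (hf : ContDiffOn ℝ 3 f U) (hU : IsOpen U) (hp : (x, t) ∈ U) :
    HasDerivAt (fun τ => lap (fun y => f (y, τ)) x) (lap (fun y => derivSnd f (y, t)) x) t := by
  simp only [lap_slice_eq]
  exact (hessianTrace.hasFDerivAt (x := fderivFst (fderivFst f) (x, t))).comp_hasDerivAt t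
    (hasDerivAt_fderivFst_fderivFst hf hU hp)

lemma continuousOn_lap_slice (hf : ContDiffOn ℝ 2 f U) (hU : IsOpen U) (x : E2) :
    ContinuousOn (fun τ => lap (fun y => f (y, τ)) x) {τ | (x, τ) ∈ U} := by
  simp only [lap_slice_eq]
  exact hessianTrace.continuous.comp_continuousOn <|
    ((hf.fderivFst hU (by norm_num : (1 : WithTop ℕ∞) + 1 ≤ 2)).fderivFst hU
      (by norm_num : (0 : WithTop ℕ∞) + 1 ≤ 1)).continuousOn.comp
      (continuous_const.prodMk continuous_id).continuousOn fun _ ht => ht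

end Laplacian

section EliminationOfTheCoefficient

open Set

variable {E : Type*} [NormedAddCommGroup E] [InnerProductSpace ℝ E]
  {g g' : ℝ → ℝ} {G G' : ℝ → E} {c a b s : ℝ}

lemma HasDerivAt.eq_zero_of_eqOn_Icc {F : ℝ → ℝ} {F' : ℝ} (hF : HasDerivAt F F' s)
    (hc : ∀ t ∈ Icc a b, F t = c) (hab : a < b) (hs : s ∈ Icc a b) : F' = 0 :=
  (uniqueDiffOn_Icc hab s hs).eq_deriv _ hF.hasDerivWithinAt
    ((hasDerivWithinAt_const s _ c).congr hc (hc s hs))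

lemma deriv_eq_of_add_sq_mul_norm_sq_eq_div_sq (hg : HasDerivAt g (g' s) s)
    (hG : HasDerivAt G (G' s) s) (hrel : ∀ t ∈ Icc a b, g t + t ^ 2 * ‖G t‖ ^ 2 = c / t ^ 2)
    (ha : 0 < a) (hab : a < b) (hs : s ∈ Icc a b) :
    g' s + 2 / s * g s + 2 * s ^ 2 * inner ℝ (G' s) (G s) + 4 * s * ‖G s‖ ^ 2 = 0 := by
  have hs0 : s ≠ 0 := (ha.trans_le hs.1).ne'
  have hconst : ∀ t ∈ Icc a b, t ^ 2 * g t + t ^ 4 * inner ℝ (G t) (G t) = c := by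
    intro t ht
    have ht0 : t ≠ 0 := (ha.trans_le ht.1).ne'
    have h := hrel t ht
    field_simp at h
    rw [real_inner_self_eq_norm_sq]
    linear_combination h
  have hF := ((hasDerivAt_pow 2 s).mul hg).add ((hasDerivAt_pow 4 s).mul (hG.inner ℝ hG))
  have h0 := hF.eq_zero_of_eqOn_Icc hconst hab hs
  rw [real_inner_comm (G' s) (G s), real_inner_self_eq_norm_sq] at h0
  field_simp
  refine mul_left_cancel₀ hs0 ?_
  linear_combination h0

theorem integral_eq_of_add_sq_mul_norm_sq_eq_div_sq [CompleteSpace E]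
    (hg : ∀ t ∈ Icc a b, HasDerivAt g (g' t) t) (hg' : ContinuousOn g' (Icc a b))
    (hG : ∀ t ∈ Icc a b, HasDerivAt G (G' t) t) (hG' : ContinuousOn G' (Icc a b))
    (hrel : ∀ t ∈ Icc a b, g t + t ^ 2 * ‖G t‖ ^ 2 = c / t ^ 2)
    (ha : 0 < a) (hab : a < b) (hs : s ∈ Icc a b) :
    g' s - (2 / s) * (∫ t in s..b, g' t) - 2 * s ^ 2 * inner ℝ (G' s) (∫ t in s..b, G' t)
      + 4 * s * ‖-(∫ t in s..b, G' t) + G b‖ ^ 2 + 2 * s ^ 2 * inner ℝ (G b) (G' s)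
      = -(2 / s) * g b := by
  have hsub : uIcc s b ⊆ Icc a b := uIcc_subset_Icc hs (right_mem_Icc.2 hab.le)
  rw [intervalIntegral.integral_eq_sub_of_hasDerivAt (fun t ht => hg t (hsub ht))
      ((hg'.mono hsub).intervalIntegrable),
    intervalIntegral.integral_eq_sub_of_hasDerivAt (fun t ht => hG t (hsub ht))
      ((hG'.mono hsub).intervalIntegrable),
    neg_sub, sub_add_cancel, inner_sub_right, real_inner_comm (G b) (G' s)]
  linear_combination deriv_eq_of_add_sq_mul_norm_sq_eq_div_sq (hg s hs) (hG s hs) hrel ha hab hs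

end EliminationOfTheCoefficient

/-- the integro-differential equation (3.5). Differentiating
`Δw + s²|∇w|² = a/s²` in the source parameter `s` and substituting
`w(x,s) = −∫_s^{s̄} q(x,τ)dτ + T(x)`, where `q = ∂_s w` and `T(x) = w(x,s̄)`,
eliminates the coefficient `a`. -/
theorem statement6 (Ω : Set E2) (hΩopen : IsOpen Ω) (a : E2 → ℝ) (sl su : ℝ)
    (hsl : 0 < sl) (hslsu : sl < su) (w : E2 × ℝ → ℝ)
    (hw : ContDiffOn ℝ 3 w (Ω ×ˢ (Set.univ : Set ℝ)))
    (heq : ∀ x ∈ Ω, ∀ s ∈ Set.Icc sl su,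
      lap (fun y => w (y, s)) x + s ^ 2 * ‖gradient (fun y => w (y, s)) x‖ ^ 2
        = a x / s ^ 2) :
    ∀ x ∈ Ω, ∀ s ∈ Set.Icc sl su,
      lap (fun y => deriv (fun t => w (y, t)) s) x
        - (2 / s) * (∫ τ in s..su, lap (fun y => deriv (fun t => w (y, t)) τ) x)
        - 2 * s ^ 2 * inner ℝ (gradient (fun y => deriv (fun t => w (y, t)) s) x)
            (∫ τ in s..su, gradient (fun y => deriv (fun t => w (y, t)) τ) x)
        + 4 * s * ‖-(∫ τ in s..su, gradient (fun y => deriv (fun t => w (y, t)) τ) x)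
            + gradient (fun y => w (y, su)) x‖ ^ 2
        + 2 * s ^ 2 * inner ℝ (gradient (fun y => w (y, su)) x)
            (gradient (fun y => deriv (fun t => w (y, t)) s) x)
      = -(2 / s) * lap (fun y => w (y, su)) x := by
  intro x hx s hs
  have hU : IsOpen (Ω ×ˢ (Set.univ : Set ℝ)) := hΩopen.prod isOpen_univ
  have hline : Set.Icc sl su ⊆ {t | (x, t) ∈ Ω ×ˢ (Set.univ : Set ℝ)} :=
    fun _ _ => ⟨hx, trivial⟩
  have hq : ContDiffOn ℝ 2 (derivSnd w) (Ω ×ˢ Set.univ) := hw.derivSnd hU (by norm_num)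
  exact integral_eq_of_add_sq_mul_norm_sq_eq_div_sq
    (fun t ht => hasDerivAt_lap_slice hw hU (hline ht))
    ((continuousOn_lap_slice hq hU x).mono hline)
    (fun t ht => hasDerivAt_gradient_slice (hw.of_le (by norm_num)) hU (hline ht))
    ((continuousOn_gradient_slice (hq.of_le (by norm_num)) hU x).mono hline)
    (heq x hx) hsl hslsu hs
end
end
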